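/- Let h_1(x) = −3x_{12} + 4x_{13} − x_{23} − x_{14} + 3x_{24} − 2x_{34} and h_2(x) = 4x_{12} − 6x_{13} + 3x_{23} + 2x_{14} − 5x_{24} + 2x_{34}. Then the set of real homogeneous quadratic polynomials q in the six variables such that (i) q = ℓ_1·x_{14} + ℓ_2·x_{23} + α·(x_{12}x_{34} − x_{13}x_{24}) for some α ∈ ℝ and homogeneous linear forms ℓ_1, ℓ_2, (ii) q vanishes identically on each of the four linear subspaces {x_{12} = x_{13} = x_{23} = x_{24} = 0}, {x_{13} = x_{23} = x_{24} = x_{34} = 0}, {x_{12} = x_{13} = x_{14} = x_{24} = 0}, {x_{13} = x_{14} = x_{24} = x_{34} = 0}, and (iii) q(x) = 0 for every x ∈ ℝ^6 with x_{12} = x_{34} = 0, h_1(x) = h_2(x) = 0 and qq(x) = 0, is exactly the four-dimensional vector space spanned by q_1 = 2x_{13}x_{24} + 4x_{23}x_{24} + x_{14}x_{24} − 2x_{12}x_{34}, q_2 = 2x_{23}x_{14} + 4x_{23}x_{24} + x_{14}x_{24}, q_3 = 4x_{13}x_{14} − 4x_{23}x_{24} + x_{14}x_{24}, q_4 = 12x_{13}x_{23}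 + 12x_{23}x_{24} + x_{14}x_{24}. Moreover, qq = (q_2 − q_1)/2 lies in this space, so the quotient of this space by the line spanned by qq is three-dimensional. -/

import Mathlib

/-!
An adjoint is `ℓ₁ x₁₄ + ℓ₂ x₂₃ + α (x₁₂x₃₄ − x₁₃x₂₄)` with linear forms `ℓ₁, ℓ₂`. Vanishing on the
four residual lines kills six of the coefficients of `ℓ₁, ℓ₂`. On the plane
`x₁₂ = x₃₄ = h₁ = h₂ = 0` the Plücker quadric is a binary form with positive discriminant, so the
two residual points are real and distinct, and vanishing there makes the restriction of the adjoint
proportional to that binary form: two more linear relations. Since the `x₁₄x₂₃` coefficient is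
shared by `ℓ₁` and `ℓ₂`, what is left is a four-dimensional space, spanned by `q₁, …, q₄`; it
contains `qq = (q₂ − q₁)/2`, so its image modulo `qq` is three-dimensional.
-/

open MvPolynomial

/-- Plücker quadric `x₁₂x₃₄ − x₁₃x₂₄ + x₁₄x₂₃`; coordinates of `ℝ^6` are ordered as
`(x₁₂, x₁₃, x₂₃, x₁₄, x₂₄, x₃₄)`, i.e. indices `0,…,5`. -/
noncomputable def qq11 : MvPolynomial (Fin 6) ℝ := X 0 * X 5 - X 1 * X 4 + X 3 * X 2

/-- `h₁ = −3x₁₂ + 4x₁₃ − x₂₃ − x₁₄ + 3x₂₄ − 2x₃₄`. -/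
noncomputable def h111 : MvPolynomial (Fin 6) ℝ :=
  -(C 3 * X 0) + C 4 * X 1 - X 2 - X 3 + C 3 * X 4 - C 2 * X 5

/-- `h₂ = 4x₁₂ − 6x₁₃ + 3x₂₃ + 2x₁₄ − 5x₂₄ + 2x₃₄`. -/
noncomputable def h211 : MvPolynomial (Fin 6) ℝ :=
  C 4 * X 0 - C 6 * X 1 + C 3 * X 2 + C 2 * X 3 - C 5 * X 4 + C 2 * X 5

/-- `q₁ = 2x₁₃x₂₄ + 4x₂₃x₂₄ + x₁₄x₂₄ − 2x₁₂x₃₄`. -/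
noncomputable def q11_1 : MvPolynomial (Fin 6) ℝ :=
  C 2 * X 1 * X 4 + C 4 * X 2 * X 4 + X 3 * X 4 - C 2 * X 0 * X 5

/-- `q₂ = 2x₂₃x₁₄ + 4x₂₃x₂₄ + x₁₄x₂₄`. -/
noncomputable def q11_2 : MvPolynomial (Fin 6) ℝ :=
  C 2 * X 2 * X 3 + C 4 * X 2 * X 4 + X 3 * X 4

/-- `q₃ = 4x₁₃x₁₄ − 4x₂₃x₂₄ + x₁₄x₂₄`. -/
noncomputable def q11_3 : MvPolynomial (Fin 6) ℝ :=
  C 4 * X 1 * X 3 - C 4 * X 2 * X 4 + X 3 * X 4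

/-- `q₄ = 12x₁₃x₂₃ + 12x₂₃x₂₄ + x₁₄x₂₄`. -/
noncomputable def q11_4 : MvPolynomial (Fin 6) ℝ :=
  C 12 * X 1 * X 2 + C 12 * X 2 * X 4 + X 3 * X 4

lemma MvPolynomial.isHomogeneous_one_iff {σ R : Type*} [Fintype σ] [CommSemiring R]
    {φ : MvPolynomial σ R} : φ.IsHomogeneous 1 ↔ ∃ a : σ → R, ∑ i, a i • X i = φ := by
  rw [← mem_homogeneousSubmodule, homogeneousSubmodule_one_eq_span_X,
    Submodule.mem_span_range_iff_exists_fun]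

lemma Submodule.finrank_map_mkQ_add_finrank {K V : Type*} [DivisionRing K] [AddCommGroup V]
    [Module K V] {N W : Submodule K V} [FiniteDimensional K W] (h : N ≤ W) :
    Module.finrank K (W.map N.mkQ) + Module.finrank K N = Module.finrank K W := by
  have key := LinearMap.finrank_range_add_finrank_ker (N.mkQ ∘ₗ W.subtype)
  rwa [LinearMap.range_comp, Submodule.range_subtype, LinearMap.ker_comp, Submodule.ker_mkQ,
    (Submodule.comapSubtypeEquivOfLe h).finrank_eq] at key

lemma proportional_of_forall_quadratic_eq_zero {K : Type*} [Field K] [NeZero (2 : K)]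
    {a b c u v w s : K} (ha : a ≠ 0) (hs : discrim a b c = s * s) (hs₀ : s ≠ 0)
    (h : ∀ t, a * (t * t) + b * t + c = 0 → u * (t * t) + v * t + w = 0) :
    a * v = u * b ∧ a * w = u * c := by
  have linear_vanishes (t : K) (ht : a * (t * t) + b * t + c = 0) :
      (a * v - u * b) * t + (a * w - u * c) = 0 := by
    linear_combination a * h t ht - u * ht
  set r₁ := (-b + s) / (2 * a)
  set r₂ := (-b - s) / (2 * a)
  have h₁ := linear_vanishes r₁ ((quadratic_eq_zero_iff ha hs r₁).mpr (Or.inl rfl))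
  have h₂ := linear_vanishes r₂ ((quadratic_eq_zero_iff ha hs r₂).mpr (Or.inr rfl))
  have hr : r₁ - r₂ ≠ 0 := by
    rw [show r₁ - r₂ = s / a by simp only [r₁, r₂]; field_simp; ring]
    exact div_ne_zero hs₀ ha
  have hv : a * v - u * b = 0 :=
    (mul_eq_zero.mp (by linear_combination h₁ - h₂ : (a * v - u * b) * (r₁ - r₂) = 0)).resolve_right
      hr
  refine ⟨sub_eq_zero.mp hv, sub_eq_zero.mp ?_⟩
  linear_combination h₁ - r₁ * hv

def IsHexahedronAdjoint (q : MvPolynomial (Fin 6) ℝ) : Prop :=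
  q.IsHomogeneous 2 ∧
  (∃ (α : ℝ) (ℓ₁ ℓ₂ : MvPolynomial (Fin 6) ℝ), ℓ₁.IsHomogeneous 1 ∧ ℓ₂.IsHomogeneous 1 ∧
    q = ℓ₁ * X 3 + ℓ₂ * X 2 + C α * (X 0 * X 5 - X 1 * X 4)) ∧
  (∀ x : Fin 6 → ℝ, x 0 = 0 → x 1 = 0 → x 2 = 0 → x 4 = 0 → eval x q = 0) ∧
  (∀ x : Fin 6 → ℝ, x 1 = 0 → x 2 = 0 → x 4 = 0 → x 5 = 0 → eval x q = 0) ∧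
  (∀ x : Fin 6 → ℝ, x 0 = 0 → x 1 = 0 → x 3 = 0 → x 4 = 0 → eval x q = 0) ∧
  (∀ x : Fin 6 → ℝ, x 1 = 0 → x 3 = 0 → x 4 = 0 → x 5 = 0 → eval x q = 0) ∧
  (∀ x : Fin 6 → ℝ, x 0 = 0 → x 5 = 0 → eval x h111 = 0 → eval x h211 = 0 →
    eval x qq11 = 0 → eval x q = 0)

/-- On the plane `x₁₂ = x₃₄ = h₁ = h₂ = 0`, parametrised by `x₁₃ = t`, `x₂₃ = 1`, the Plücker
quadric restricts to `2t² − t − 4`, whose roots `(1 ± √33)/4` are the two residual points. -/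
lemma eval_residualPlane (t : ℝ) :
    eval ![0, t, 1, -2 * t - 4, -2 * t - 1, 0] h111 = 0 ∧
    eval ![0, t, 1, -2 * t - 4, -2 * t - 1, 0] h211 = 0 ∧
    eval ![0, t, 1, -2 * t - 4, -2 * t - 1, 0] qq11 = 2 * (t * t) + -1 * t + -4 := by
  refine ⟨?_, ?_, ?_⟩ <;> simp [h111, h211, qq11] <;> ring

lemma IsHexahedronAdjoint.mem_span {q : MvPolynomial (Fin 6) ℝ} (hq : IsHexahedronAdjoint q) :
    q ∈ Submodule.span ℝ (Set.range ![q11_1, q11_2, q11_3, q11_4]) := by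
  obtain ⟨-, ⟨α, ℓ₁, ℓ₂, hℓ₁, hℓ₂, rfl⟩, hA, hB, hC, hD, hE⟩ := hq
  obtain ⟨a, rfl⟩ := isHomogeneous_one_iff.mp hℓ₁
  obtain ⟨b, rfl⟩ := isHomogeneous_one_iff.mp hℓ₂
  have ha₃ : a 3 = 0 := by
    simpa [Fin.sum_univ_six] using hA ![0, 0, 0, 1, 0, 0] rfl rfl rfl rfl
  have ha₅ : a 5 = 0 := by
    simpa [Fin.sum_univ_six, ha₃] using hA ![0, 0, 0, 1, 0, 1] rfl rfl rfl rfl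
  have ha₀ : a 0 = 0 := by
    simpa [Fin.sum_univ_six, ha₃] using hB ![1, 0, 0, 1, 0, 0] rfl rfl rfl rfl
  have hb₂ : b 2 = 0 := by
    simpa [Fin.sum_univ_six] using hC ![0, 0, 1, 0, 0, 0] rfl rfl rfl rfl
  have hb₅ : b 5 = 0 := by
    simpa [Fin.sum_univ_six, hb₂] using hC ![0, 0, 1, 0, 0, 1] rfl rfl rfl rfl
  have hb₀ : b 0 = 0 := by
    simpa [Fin.sum_univ_six, hb₂] using hD ![1, 0, 1, 0, 0, 0] rfl rfl rfl rfl
  -- `u t² + v t + w` is the adjoint restricted to the residual plane of `eval_residualPlane`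
  obtain ⟨h₁, h₂⟩ := proportional_of_forall_quadratic_eq_zero (a := 2) (b := -1) (c := -4)
    (u := -2 * a 1 + 4 * a 4 + 2 * α)
    (v := -4 * a 1 - 2 * a 2 + 10 * a 4 + b 1 - 2 * b 3 - 2 * b 4 + α)
    (w := -4 * a 2 + 4 * a 4 - 4 * b 3 - b 4) (s := √33) two_ne_zero
    (by rw [discrim, Real.mul_self_sqrt (by norm_num)]; norm_num) (by positivity) fun t ht => by
      obtain ⟨h₁, h₂, hqq⟩ := eval_residualPlane t
      have := hE _ rfl rfl h₁ h₂ (hqq.trans ht)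
      simp only [map_add, map_sub, map_mul, smul_eval, eval_C, eval_X, Matrix.cons_val,
        Fin.sum_univ_six, ha₀, ha₃, ha₅, hb₀, hb₂, hb₅] at this
      linear_combination this
  have ha₄ : 12 * a 4 = -6 * α + 6 * (a 2 + b 3) + 3 * a 1 + b 1 := by linarith
  have hb₄ : 12 * b 4 = -24 * α + 24 * (a 2 + b 3) - 12 * a 1 + 12 * b 1 := by linarith
  refine (Submodule.mem_span_range_iff_exists_fun ℝ).mpr
    ⟨![-α / 2, (a 2 + b 3) / 2, a 1 / 4, b 1 / 12], MvPolynomial.funext fun x => ?_⟩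
  simp only [map_add, map_sub, map_mul, smul_eval, eval_C, eval_X, Matrix.cons_val,
    Fin.sum_univ_four, Fin.sum_univ_six, q11_1, q11_2, q11_3, q11_4, smul_add, ha₀, ha₃, ha₅, hb₀,
    hb₂, hb₅]
  linear_combination -(x 3 * x 4 / 12) * ha₄ - (x 2 * x 4 / 12) * hb₄

lemma isHexahedronAdjoint_sum_smul (c : Fin 4 → ℝ) :
    IsHexahedronAdjoint (∑ i, c i • ![q11_1, q11_2, q11_3, q11_4] i) := by
  set q := ∑ i, c i • ![q11_1, q11_2, q11_3, q11_4] i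
  set ℓ₁ : MvPolynomial (Fin 6) ℝ :=
    ∑ i, ![0, 4 * c 2, 2 * c 1, 0, c 0 + c 1 + c 2 + c 3, 0] i • X i
  set ℓ₂ : MvPolynomial (Fin 6) ℝ :=
    ∑ i, ![0, 12 * c 3, 0, 0, 4 * c 0 + 4 * c 1 - 4 * c 2 + 12 * c 3, 0] i • X i
  have hℓ₁ : ℓ₁.IsHomogeneous 1 := isHomogeneous_one_iff.mpr ⟨_, rfl⟩
  have hℓ₂ : ℓ₂.IsHomogeneous 1 := isHomogeneous_one_iff.mpr ⟨_, rfl⟩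
  have hev (x : Fin 6 → ℝ) : eval x q = c 0 * (2 * x 1 * x 4 + 4 * x 2 * x 4 + x 3 * x 4 -
      2 * x 0 * x 5) + c 1 * (2 * x 2 * x 3 + 4 * x 2 * x 4 + x 3 * x 4) +
      c 2 * (4 * x 1 * x 3 - 4 * x 2 * x 4 + x 3 * x 4) +
      c 3 * (12 * x 1 * x 2 + 12 * x 2 * x 4 + x 3 * x 4) := by
    simp only [map_add, map_sub, map_mul, smul_eval, eval_C, eval_X, Matrix.cons_val, q,
      Fin.sum_univ_four, q11_1, q11_2, q11_3, q11_4, smul_add]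
    ring
  have hform : q = ℓ₁ * X 3 + ℓ₂ * X 2 + C (-2 * c 0) * (X 0 * X 5 - X 1 * X 4) :=
    MvPolynomial.funext fun x => by
      simp only [map_add, map_sub, map_mul, map_neg, smul_eval, eval_C, eval_X, Matrix.cons_val,
        hev, ℓ₁, ℓ₂, Fin.sum_univ_six]
      ring
  refine ⟨?_, ⟨_, ℓ₁, ℓ₂, hℓ₁, hℓ₂, hform⟩, ?_, ?_, ?_, ?_, ?_⟩
  · rw [hform]
    exact ((hℓ₁.mul (isHomogeneous_X ℝ 3)).add (hℓ₂.mul (isHomogeneous_X ℝ 2))).add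
      ((isHomogeneous_C _ _).mul (((isHomogeneous_X ℝ 0).mul (isHomogeneous_X ℝ 5)).sub
        ((isHomogeneous_X ℝ 1).mul (isHomogeneous_X ℝ 4))))
  · intro x h₀ h₁ h₂ h₄; simp [hev, h₀, h₁, h₂, h₄]
  · intro x h₁ h₂ h₄ h₅; simp [hev, h₁, h₂, h₄, h₅]
  · intro x h₀ h₁ h₃ h₄; simp [hev, h₀, h₁, h₃, h₄]
  · intro x h₁ h₃ h₄ h₅; simp [hev, h₁, h₃, h₄, h₅]
  · intro x h₀ h₅ hh₁ hh₂ hqq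
    simp only [map_add, map_sub, map_mul, map_neg, eval_C, eval_X, h111, h211, qq11, h₀, h₅]
      at hh₁ hh₂ hqq
    have h₃ : x 3 = -2 * x 1 - 4 * x 2 := by linarith
    have h₄ : x 4 = -2 * x 1 - x 2 := by linarith
    rw [hev, h₀, h₅, h₃, h₄]
    rw [h₃, h₄] at hqq
    linear_combination (2 * c 1 - 2 * c 2 + 2 * c 3) * hqq

lemma isHexahedronAdjoint_iff_mem_span {q : MvPolynomial (Fin 6) ℝ} :
    IsHexahedronAdjoint q ↔ q ∈ Submodule.span ℝ (Set.range ![q11_1, q11_2, q11_3, q11_4]) := by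
  refine ⟨IsHexahedronAdjoint.mem_span, fun hq => ?_⟩
  obtain ⟨c, rfl⟩ := (Submodule.mem_span_range_iff_exists_fun ℝ).mp hq
  exact isHexahedronAdjoint_sum_smul c

lemma linearIndependent_q11 : LinearIndependent ℝ ![q11_1, q11_2, q11_3, q11_4] := by
  rw [Fintype.linearIndependent_iff]
  intro g hg
  have h₀ := congrArg (eval ![1, 0, 0, 0, 0, 1]) hg
  have h₁ := congrArg (eval ![0, 0, 1, 1, 0, 0]) hg
  have h₂ := congrArg (eval ![0, 1, 0, 1, 0, 0]) hg
  have h₃ := congrArg (eval ![0, 1, 1, 0, 0, 0]) hg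
  simp [Fin.sum_univ_four, q11_1, q11_2, q11_3, q11_4] at h₀ h₁ h₂ h₃
  intro i
  fin_cases i <;> assumption

lemma two_smul_qq11 : (2 : ℝ) • qq11 = q11_2 - q11_1 := by
  rw [qq11, q11_1, q11_2, smul_eq_C_mul]
  ring

lemma finrank_map_mkQ_span_qq11 :
    Module.finrank ℝ ((Submodule.span ℝ (Set.range ![q11_1, q11_2, q11_3, q11_4])).map
      (Submodule.span ℝ {qq11}).mkQ) = 3 := by
  have hqq : qq11 ≠ 0 := fun h => by simpa [qq11] using congrArg (eval ![1, 0, 0, 0, 0, 1]) h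
  have hle :
      Submodule.span ℝ {qq11} ≤ Submodule.span ℝ (Set.range ![q11_1, q11_2, q11_3, q11_4]) := by
    rw [Submodule.span_singleton_le_iff_mem,
      ← Submodule.smul_mem_iff _ (two_ne_zero : (2 : ℝ) ≠ 0), two_smul_qq11]
    exact Submodule.sub_mem _ (Submodule.subset_span ⟨1, rfl⟩) (Submodule.subset_span ⟨0, rfl⟩)
  have := FiniteDimensional.span_of_finite ℝ (Set.finite_range ![q11_1, q11_2, q11_3, q11_4])
  have := Submodule.finrank_map_mkQ_add_finrank hle
  rw [finrank_span_singleton hqq, finrank_span_eq_card linearIndependent_q11] at this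
  simpa using this

theorem stmt11 :
    {q : MvPolynomial (Fin 6) ℝ |
        q.IsHomogeneous 2 ∧
        (∃ (α : ℝ) (ℓ₁ ℓ₂ : MvPolynomial (Fin 6) ℝ), ℓ₁.IsHomogeneous 1 ∧ ℓ₂.IsHomogeneous 1 ∧
          q = ℓ₁ * X 3 + ℓ₂ * X 2 + C α * (X 0 * X 5 - X 1 * X 4)) ∧
        (∀ x : Fin 6 → ℝ, x 0 = 0 → x 1 = 0 → x 2 = 0 → x 4 = 0 → eval x q = 0) ∧
        (∀ x : Fin 6 → ℝ, x 1 = 0 → x 2 = 0 → x 4 = 0 → x 5 = 0 → eval x q = 0) ∧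
        (∀ x : Fin 6 → ℝ, x 0 = 0 → x 1 = 0 → x 3 = 0 → x 4 = 0 → eval x q = 0) ∧
        (∀ x : Fin 6 → ℝ, x 1 = 0 → x 3 = 0 → x 4 = 0 → x 5 = 0 → eval x q = 0) ∧
        (∀ x : Fin 6 → ℝ, x 0 = 0 → x 5 = 0 → eval x h111 = 0 → eval x h211 = 0 →
          eval x qq11 = 0 → eval x q = 0)} =
      ↑(Submodule.span ℝ {q11_1, q11_2, q11_3, q11_4}) ∧
    LinearIndependent ℝ ![q11_1, q11_2, q11_3, q11_4] ∧
    (2 : ℝ) • qq11 = q11_2 - q11_1 ∧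
    Module.finrank ℝ
        ↥(Submodule.map (Submodule.span ℝ {qq11}).mkQ
          (Submodule.span ℝ {q11_1, q11_2, q11_3, q11_4})) = 3 := by
  have hrange : Set.range ![q11_1, q11_2, q11_3, q11_4] = {q11_1, q11_2, q11_3, q11_4} := by
    simp only [Matrix.range_cons, Matrix.range_empty, Set.union_empty, Set.singleton_union]
  rw [← hrange]
  exact ⟨Set.ext fun _ => isHexahedronAdjoint_iff_mem_span, linearIndependent_q11, two_smul_qq11,
    finrank_map_mkQ_span_qq11⟩
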